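/- Characterization of global solutions of the trust-region subproblem: s* with ‖s*‖₂ ≤ Δ is a global minimizer of m(s) = gᵀs + ½ sᵀHs over {‖s‖₂ ≤ Δ} if and only if there exists λ ≥ 0 such that (H + λI) s* = -g, H + λI is positive semidefinite, and λ(Δ - ‖s*‖₂) = 0. -/

import Mathlib

open scoped RealInnerProductSpace

private lemma ms_key0 (t₀ a b : ℝ) (ht : 0 < t₀)
    (h : ∀ ε : ℝ, 0 < ε → ε ≤ t₀ → ε * b ≤ a) : 0 ≤ a := by
  by_contra hlt
  push_neg at hlt
  rcases le_or_gt b 0 with hb | hb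
  · have hq : (0:ℝ) < a / (2*b - 1) := div_pos_of_neg_of_neg hlt (by linarith)
    have h1 := h (min t₀ (a / (2*b-1))) (lt_min ht hq) (min_le_left _ _)
    have h2 : min t₀ (a / (2*b-1)) ≤ a / (2*b-1) := min_le_right _ _
    have h3 : (a / (2*b-1)) * b ≤ min t₀ (a / (2*b-1)) * b :=
      mul_le_mul_of_nonpos_right h2 hb
    have h4 : (a / (2*b-1)) * b ≤ a := le_trans h3 h1
    rw [div_mul_eq_mul_div, div_le_iff_of_neg (by linarith)] at h4
    nlinarith
  · have h1 := h (min t₀ 1) (lt_min ht one_pos) (min_le_left _ _)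
    have : 0 < min t₀ 1 * b := mul_pos (lt_min ht one_pos) hb
    linarith

private lemma ms_key1 (t₀ a c : ℝ) (ht : 0 < t₀)
    (h : ∀ t : ℝ, 0 < t → t ≤ t₀ → 0 ≤ t * a + t^2 * c) : 0 ≤ a := by
  refine ms_key0 t₀ a (-c) ht (fun ε hε hε' => ?_)
  have := h ε hε hε'
  nlinarith

set_option maxHeartbeats 1000000 in
/-- Moré–Sorensen characterization: s* with ‖s*‖ ≤ Δ is a global minimizer of
m(s) = gᵀs + ½ sᵀHs over {‖s‖ ≤ Δ} iff there is λ ≥ 0 with (H + λI)s* = -g,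
H + λI ⪰ 0, and λ(Δ - ‖s*‖) = 0. -/
theorem tr_subproblem_characterization (n : ℕ) (g : EuclideanSpace ℝ (Fin n))
    (H : Matrix (Fin n) (Fin n) ℝ) (hH : H.IsSymm) (Δ : ℝ) (hΔ : 0 < Δ)
    (m : EuclideanSpace ℝ (Fin n) → ℝ)
    (hm : ∀ s, m s = (inner ℝ g s : ℝ) +
      (1 / 2) * (inner ℝ s (Matrix.toEuclideanLin H s) : ℝ))
    (sstar : EuclideanSpace ℝ (Fin n)) (hsΔ : ‖sstar‖ ≤ Δ) :
    (∀ s : EuclideanSpace ℝ (Fin n), ‖s‖ ≤ Δ → m sstar ≤ m s) ↔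
      ∃ lam : ℝ, 0 ≤ lam ∧
        Matrix.toEuclideanLin (H + lam • (1 : Matrix (Fin n) (Fin n) ℝ)) sstar = -g ∧
        (H + lam • (1 : Matrix (Fin n) (Fin n) ℝ)).PosSemidef ∧
        lam * (Δ - ‖sstar‖) = 0 := by
  have hHerm : H.IsHermitian := by ext i j; simp [Matrix.conjTranspose_apply, hH.apply]
  have hsym := Matrix.isHermitian_iff_isSymmetric.mp hHerm
  set A := Matrix.toEuclideanLin H with hAdef
  have hexp : ∀ w, m (sstar + w) = m sstar + (⟪g + A sstar, w⟫ + (1/2) * ⟪w, A w⟫) := by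
    intro w
    simp only [hm, hAdef, map_add, inner_add_left, inner_add_right]
    have h1 : ⟪A sstar, w⟫ = ⟪sstar, A w⟫ := hsym sstar w
    have h2 : ⟪w, A sstar⟫ = ⟪A sstar, w⟫ := real_inner_comm _ _
    simp only [hAdef] at h1 h2
    linarith
  set gr := g + A sstar with hgrdef
  have hone : ∀ x : EuclideanSpace ℝ (Fin n),
      Matrix.toEuclideanLin (1 : Matrix (Fin n) (Fin n) ℝ) x = x := by
    intro x
    rw [Matrix.toEuclideanLin_apply, Matrix.one_mulVec]
  have hlin : ∀ (lam : ℝ) (x : EuclideanSpace ℝ (Fin n)),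
      Matrix.toEuclideanLin (H + lam • 1) x = A x + lam • x := by
    intro lam x
    rw [map_add, map_smul]
    simp only [LinearMap.add_apply, LinearMap.smul_apply, hone, hAdef]
  clear_value A gr
  have hherm' : ∀ lam : ℝ, (H + lam • (1 : Matrix (Fin n) (Fin n) ℝ)).IsHermitian := by
    intro lam
    have h1 : (lam • (1 : Matrix (Fin n) (Fin n) ℝ)).IsHermitian := by
      simp [Matrix.IsHermitian, Matrix.conjTranspose_smul]
    exact hHerm.add h1
  have hpsd_of : ∀ lam : ℝ,
      (∀ v : EuclideanSpace ℝ (Fin n), 0 ≤ ⟪v, A v⟫ + lam * ‖v‖^2) →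
      (H + lam • (1 : Matrix (Fin n) (Fin n) ℝ)).PosSemidef := by
    intro lam h
    refine .of_dotProduct_mulVec_nonneg (hherm' lam) fun x => ?_
    have h3 : (0:ℝ) ≤ ⟪WithLp.toLp 2 x,
        Matrix.toEuclideanLin (H + lam • 1) (WithLp.toLp 2 x)⟫ := by
      rw [hlin, inner_add_right, real_inner_smul_right, real_inner_self_eq_norm_sq]
      exact h (WithLp.toLp 2 x)
    rw [dotProduct_comm]
    exact h3
  have hof_psd : ∀ lam : ℝ,
      (H + lam • (1 : Matrix (Fin n) (Fin n) ℝ)).PosSemidef →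
      (∀ v : EuclideanSpace ℝ (Fin n), 0 ≤ ⟪v, A v⟫ + lam * ‖v‖^2) := by
    intro lam hps v
    have h2 := hps.dotProduct_mulVec_nonneg (WithLp.ofLp v)
    have h3 : (0:ℝ) ≤ ⟪v, Matrix.toEuclideanLin (H + lam • 1) v⟫ := by
      rw [EuclideanSpace.inner_eq_star_dotProduct, dotProduct_comm]; exact h2
    rwa [hlin, inner_add_right, real_inner_smul_right, real_inner_self_eq_norm_sq] at h3
  constructor
  · intro hmin
    rcases eq_or_lt_of_le hsΔ with heq | hlt
    · -- boundary case ‖sstar‖ = Δ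
      have hssq : ‖sstar‖^2 = Δ^2 := by rw [heq]
      have hsne : sstar ≠ 0 := by
        intro h0; rw [h0, norm_zero] at heq; exact absurd heq.symm (ne_of_gt hΔ)
      have hFO : ∀ d : EuclideanSpace ℝ (Fin n), ⟪sstar, d⟫ < 0 → 0 ≤ ⟪gr, d⟫ := by
        intro d hd
        have hdne : d ≠ 0 := by
          intro h0; rw [h0, inner_zero_right] at hd; exact lt_irrefl _ hd
        have hdn : (0:ℝ) < ‖d‖^2 := pow_pos (norm_pos_iff.mpr hdne) 2
        have ht0 : (0:ℝ) < -2 * ⟪sstar, d⟫ / ‖d‖^2 := div_pos (by linarith) hdn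
        refine ms_key1 _ _ ((1/2) * ⟪d, A d⟫) ht0 (fun t htpos htle => ?_)
        have hfeas : ‖sstar + t • d‖ ≤ Δ := by
          have hnq : ‖sstar + t • d‖^2 = ‖sstar‖^2 + 2 * (t * ⟪sstar, d⟫) + t^2 * ‖d‖^2 := by
            rw [norm_add_sq_real, real_inner_smul_right, norm_smul]
            rw [Real.norm_eq_abs, abs_of_pos htpos]
            ring
          have hb : t^2 * ‖d‖^2 ≤ t * (-2 * ⟪sstar, d⟫) := by
            have h5 : t * ‖d‖^2 ≤ (-2 * ⟪sstar, d⟫ / ‖d‖^2) * ‖d‖^2 :=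
              mul_le_mul_of_nonneg_right htle (le_of_lt hdn)
            rw [div_mul_cancel₀ _ (ne_of_gt hdn)] at h5
            nlinarith
          have h6 : ‖sstar + t • d‖^2 ≤ Δ^2 := by rw [hnq, hssq]; nlinarith
          nlinarith [norm_nonneg (sstar + t • d)]
        have h7 := hmin _ hfeas
        rw [hexp (t • d), real_inner_smul_right, map_smul, real_inner_smul_left,
          real_inner_smul_right] at h7
        nlinarith
      have hFO' : ∀ d : EuclideanSpace ℝ (Fin n), ⟪sstar, d⟫ ≤ 0 → 0 ≤ ⟪gr, d⟫ := by
        intro d hd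
        rcases lt_or_eq_of_le hd with hlt' | heq'
        · exact hFO d hlt'
        · refine ms_key0 1 _ ⟪gr, sstar⟫ one_pos (fun ε hε _ => ?_)
          have h8 : ⟪sstar, d - ε • sstar⟫ < 0 := by
            rw [inner_sub_right, real_inner_smul_right, real_inner_self_eq_norm_sq, ← heq']
            have : 0 < ε * ‖sstar‖^2 := mul_pos hε (pow_pos (norm_pos_iff.mpr hsne) 2)
            linarith
          have h9 := hFO _ h8
          rw [inner_sub_right, real_inner_smul_right] at h9
          linarith
      have hperp : ∀ d : EuclideanSpace ℝ (Fin n), ⟪sstar, d⟫ = 0 → ⟪gr, d⟫ = 0 := by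
        intro d hd
        have h1 := hFO' d (le_of_eq hd)
        have h2 := hFO' (-d) (by rw [inner_neg_right, hd, neg_zero])
        rw [inner_neg_right] at h2
        linarith
      set c : ℝ := ⟪gr, sstar⟫ / Δ^2 with hcdef
      clear_value c
      have hΔ2 : (0:ℝ) < Δ^2 := pow_pos hΔ 2
      have hgr_eq : gr = c • sstar := by
        have hd0 : ⟪sstar, gr - c • sstar⟫ = 0 := by
          rw [inner_sub_right, real_inner_smul_right, real_inner_self_eq_norm_sq, hssq,
            hcdef, real_inner_comm]
          field_simp
          ring
        have h1 : ⟪gr, gr - c • sstar⟫ = 0 := hperp _ hd0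
        have h2 : ⟪c • sstar, gr - c • sstar⟫ = 0 := by
          rw [real_inner_smul_left, hd0, mul_zero]
        have h3 : ⟪gr - c • sstar, gr - c • sstar⟫ = (0:ℝ) := by
          rw [inner_sub_left, h1, h2, sub_zero]
        have h4 : gr - c • sstar = 0 := by
          have := inner_self_eq_zero (𝕜 := ℝ) (x := gr - c • sstar)
          exact this.mp h3
        have := sub_eq_zero.mp h4
        exact this
      have hclam : c ≤ 0 := by
        have h1 := hFO (-sstar) (by
          rw [inner_neg_right, real_inner_self_eq_norm_sq]
          have : 0 < ‖sstar‖^2 := pow_pos (norm_pos_iff.mpr hsne) 2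
          linarith)
        rw [inner_neg_right] at h1
        rw [hcdef]
        apply div_nonpos_of_nonpos_of_nonneg (by linarith) (le_of_lt hΔ2)
      -- quadratic condition for boundary points
      have hQ1 : ∀ s : EuclideanSpace ℝ (Fin n), ‖s‖ = Δ →
          0 ≤ ⟪s - sstar, A (s - sstar)⟫ + (-c) * ‖s - sstar‖^2 := by
        intro s hs
        have h7 : m sstar ≤ m (sstar + (s - sstar)) := by
          rw [show sstar + (s - sstar) = s by abel]; exact hmin s (le_of_eq hs)
        rw [hexp (s - sstar)] at h7
        have hw : ⟪gr, s - sstar⟫ = c * ⟪sstar, s - sstar⟫ := by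
          rw [hgr_eq, real_inner_smul_left]
        have hw2 : ⟪sstar, s - sstar⟫ = ⟪sstar, s⟫ - Δ^2 := by
          rw [inner_sub_right, real_inner_self_eq_norm_sq, hssq]
        have hw3 : ‖s - sstar‖^2 = 2*Δ^2 - 2*⟪sstar, s⟫ := by
          rw [norm_sub_sq_real, real_inner_comm, hssq]
          have : ‖s‖^2 = Δ^2 := by rw [hs]
          linarith
        nlinarith [h7, hw, hw2, hw3]
      have hQ2 : ∀ v : EuclideanSpace ℝ (Fin n), ⟪sstar, v⟫ ≠ 0 →
          0 ≤ ⟪v, A v⟫ + (-c) * ‖v‖^2 := by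
        intro v hv
        have hvne : v ≠ 0 := by
          intro h0; rw [h0, inner_zero_right] at hv; exact hv rfl
        have hvn : (0:ℝ) < ‖v‖^2 := pow_pos (norm_pos_iff.mpr hvne) 2
        obtain ⟨t, htdef⟩ : ∃ t : ℝ, t = -2 * ⟪sstar, v⟫ / ‖v‖^2 := ⟨_, rfl⟩
        have htmul : t * ‖v‖^2 = -2 * ⟪sstar, v⟫ := by
          rw [htdef]; exact div_mul_cancel₀ _ (ne_of_gt hvn)
        have htne : t ≠ 0 := by
          rw [htdef]
          apply div_ne_zero _ (ne_of_gt hvn)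
          intro h0
          apply hv
          linarith
        have hnq : ‖sstar + t • v‖^2 = Δ^2 := by
          rw [norm_add_sq_real, real_inner_smul_right, norm_smul, Real.norm_eq_abs,
            mul_pow, sq_abs, hssq]
          have h9 : t^2 * ‖v‖^2 = t * (-2 * ⟪sstar, v⟫) := by rw [← htmul]; ring
          linarith
        have hs_norm : ‖sstar + t • v‖ = Δ := by
          have h1 : ‖sstar + t • v‖ ≤ Δ := by nlinarith [norm_nonneg (sstar + t • v)]
          have h2 : Δ ≤ ‖sstar + t • v‖ := by nlinarith [norm_nonneg (sstar + t • v)]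
          linarith
        have h3 := hQ1 (sstar + t • v) hs_norm
        rw [show sstar + t • v - sstar = t • v by abel, map_smul, real_inner_smul_left,
          real_inner_smul_right, norm_smul, Real.norm_eq_abs, mul_pow, sq_abs] at h3
        have ht2 : (0:ℝ) < t^2 := by
          have := pow_pos (abs_pos.mpr htne) 2
          rwa [sq_abs] at this
        nlinarith [h3, ht2]
      have hQ3 : ∀ v : EuclideanSpace ℝ (Fin n), 0 ≤ ⟪v, A v⟫ + (-c) * ‖v‖^2 := by
        intro v
        by_cases hv : ⟪sstar, v⟫ = 0
        · have hstep : ∀ ε : ℝ, 0 < ε →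
              0 ≤ (⟪v, A v⟫ + (-c) * ‖v‖^2) +
                ε^2 * (⟪sstar, A sstar⟫ + (-c) * ‖sstar‖^2) := by
            intro ε hε
            have hip : ⟪sstar, v + ε • sstar⟫ ≠ 0 := by
              rw [inner_add_right, real_inner_smul_right, hv, real_inner_self_eq_norm_sq,
                hssq, zero_add]
              exact ne_of_gt (mul_pos hε hΔ2)
            have him : ⟪sstar, v - ε • sstar⟫ ≠ 0 := by
              rw [inner_sub_right, real_inner_smul_right, hv, real_inner_self_eq_norm_sq,
                hssq, zero_sub]
              exact ne_of_lt (neg_lt_zero.mpr (mul_pos hε hΔ2))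
            have hp := hQ2 _ hip
            have hm' := hQ2 _ him
            have e1 : ⟪v + ε • sstar, A (v + ε • sstar)⟫
                = ⟪v, A v⟫ + ε * ⟪v, A sstar⟫ + ε * ⟪sstar, A v⟫
                  + ε^2 * ⟪sstar, A sstar⟫ := by
              simp only [map_add, map_smul, inner_add_left, inner_add_right,
                real_inner_smul_left, real_inner_smul_right]
              ring
            have e2 : ⟪v - ε • sstar, A (v - ε • sstar)⟫
                = ⟪v, A v⟫ - ε * ⟪v, A sstar⟫ - ε * ⟪sstar, A v⟫
                  + ε^2 * ⟪sstar, A sstar⟫ := by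
              simp only [map_sub, map_smul, inner_sub_left, inner_sub_right,
                real_inner_smul_left, real_inner_smul_right]
              ring
            have hv' : ⟪v, sstar⟫ = (0:ℝ) := by rw [real_inner_comm]; exact hv
            have n1 : ‖v + ε • sstar‖^2 = ‖v‖^2 + ε^2 * ‖sstar‖^2 := by
              rw [norm_add_sq_real, real_inner_smul_right, hv', norm_smul,
                Real.norm_eq_abs, mul_pow, sq_abs]
              ring
            have n2 : ‖v - ε • sstar‖^2 = ‖v‖^2 + ε^2 * ‖sstar‖^2 := by
              rw [norm_sub_sq_real, real_inner_smul_right, hv', norm_smul,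
                Real.norm_eq_abs, mul_pow, sq_abs]
              ring
            rw [e1, n1] at hp
            rw [e2, n2] at hm'
            nlinarith [hp, hm']
          refine ms_key0 1 _ (-(⟪sstar, A sstar⟫ + (-c) * ‖sstar‖^2)) one_pos
            (fun δ hδ _ => ?_)
          have h := hstep (Real.sqrt δ) (Real.sqrt_pos.mpr hδ)
          rw [Real.sq_sqrt hδ.le] at h
          linarith
        · exact hQ2 v hv
      refine ⟨-c, by linarith, ?_, hpsd_of _ hQ3, by rw [heq]; ring⟩
      rw [hlin, neg_smul]
      have hkey : g + A sstar = c • sstar := by rw [← hgrdef]; exact hgr_eq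
      rw [← hkey]
      abel
    · -- interior case ‖sstar‖ < Δ
      have hsecond : ∀ w : EuclideanSpace ℝ (Fin n), ∃ t₀ : ℝ, 0 < t₀ ∧
          ∀ t : ℝ, 0 < t → t ≤ t₀ → 0 ≤ t * ⟪gr, w⟫ + t^2 * ((1/2) * ⟪w, A w⟫) := by
        intro w
        have hw1 : (0:ℝ) < ‖w‖ + 1 := by positivity
        refine ⟨(Δ - ‖sstar‖) / (‖w‖ + 1), div_pos (by linarith) hw1, fun t htpos htle => ?_⟩
        have hfeas : ‖sstar + t • w‖ ≤ Δ := by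
          have h1 : ‖sstar + t • w‖ ≤ ‖sstar‖ + t * ‖w‖ := by
            calc ‖sstar + t • w‖ ≤ ‖sstar‖ + ‖t • w‖ := norm_add_le _ _
              _ = ‖sstar‖ + t * ‖w‖ := by
                  rw [norm_smul, Real.norm_eq_abs, abs_of_pos htpos]
          have h2 : t * (‖w‖ + 1) ≤ Δ - ‖sstar‖ := by
            have := mul_le_mul_of_nonneg_right htle (le_of_lt hw1)
            rwa [div_mul_cancel₀ _ (ne_of_gt hw1)] at this
          nlinarith [norm_nonneg w]
        have h7 := hmin _ hfeas
        rw [hexp (t • w), real_inner_smul_right, map_smul, real_inner_smul_left,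
          real_inner_smul_right] at h7
        nlinarith
      have hgrad : ∀ w : EuclideanSpace ℝ (Fin n), 0 ≤ ⟪gr, w⟫ := by
        intro w
        obtain ⟨t₀, ht₀, h⟩ := hsecond w
        exact ms_key1 t₀ _ _ ht₀ h
      have hzero : ∀ w : EuclideanSpace ℝ (Fin n), ⟪gr, w⟫ = 0 := by
        intro w
        have h1 := hgrad w
        have h2 := hgrad (-w)
        rw [inner_neg_right] at h2
        linarith
      have hgr0 : gr = 0 := by
        have := hzero gr
        exact inner_self_eq_zero.mp this
      have hpsdH : ∀ v : EuclideanSpace ℝ (Fin n), 0 ≤ ⟪v, A v⟫ + (0:ℝ) * ‖v‖^2 := by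
        intro v
        obtain ⟨t₀, ht₀, h⟩ := hsecond v
        have h1 := h t₀ ht₀ le_rfl
        rw [hzero v] at h1
        have ht2 : (0:ℝ) < t₀^2 := pow_pos ht₀ 2
        nlinarith [h1, ht2]
      refine ⟨0, le_rfl, ?_, hpsd_of 0 hpsdH, by ring⟩
      rw [hlin, zero_smul, add_zero]
      have hz : g + A sstar = 0 := by rw [← hgrdef]; exact hgr0
      exact eq_neg_of_add_eq_zero_right hz
  · rintro ⟨lam, hlam, hlineq, hpsd, hcomp⟩ s hs
    have hAs : A sstar + lam • sstar = -g := by rw [← hlin lam sstar]; exact hlineq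
    have hgr' : gr + lam • sstar = 0 := by
      rw [hgrdef, add_assoc, hAs, add_neg_cancel]
    have hgr'' : gr = -(lam • sstar) := eq_neg_of_add_eq_zero_left hgr'
    have hq := hof_psd lam hpsd (s - sstar)
    have h7 : m s = m sstar + (⟪gr, s - sstar⟫ + (1/2) * ⟪s - sstar, A (s - sstar)⟫) := by
      have := hexp (s - sstar)
      rwa [show sstar + (s - sstar) = s by abel] at this
    have hgrw : ⟪gr, s - sstar⟫ = -(lam * ⟪sstar, s - sstar⟫) := by
      rw [hgr'', inner_neg_left, real_inner_smul_left]
    have hw2 : ⟪sstar, s - sstar⟫ = ⟪sstar, s⟫ - ‖sstar‖^2 := by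
      rw [inner_sub_right, real_inner_self_eq_norm_sq]
    have hw3 : ‖s - sstar‖^2 = ‖s‖^2 - 2*⟪sstar, s⟫ + ‖sstar‖^2 := by
      rw [norm_sub_sq_real, real_inner_comm]
    rcases eq_or_lt_of_le hlam with h0 | hpos
    · rw [← h0] at hq hgrw
      nlinarith [hq, hgrw, h7]
    · have hΔs : ‖sstar‖ = Δ := by
        rcases mul_eq_zero.mp hcomp with h | h
        · exact absurd h (ne_of_gt hpos)
        · linarith
      have hss : ‖s‖^2 ≤ Δ^2 := by nlinarith [norm_nonneg s]
      nlinarith [hq, hgrw, hw2, hw3, h7, mul_nonneg hpos.le (sub_nonneg.mpr hss), hΔs]
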